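/- arXiv:1501.02992 — 4 statements merged into one kernel-verified Lean document; each statement's English description precedes it below -/
import Mathlib

section
/- Let q > 1 be real and m ≥ 1. For 1 ≤ j ≤ m let f_j be a formal Laurent series over ℂ such that g_j := 1 + (q−1) f_j is nonzero; write v_j := v₀(g_j) and t_j := t₀(g_j). Assume v_1 ≤ v_2 ≤ ⋯ ≤ v_m and the non-resonance condition: for all j ≠ k, if v_j = v_k then t_j/t_k ∉ {q^n : n ∈ ℤ}. Let C be the m × m matrix over the field of formal Laurent series whose diagonal entries are g_1, …, g_m, whose entries on the superdiagonal all equal q − 1, and whose remaining entries are 0, and let D be the diagonal matrix Diag(t_1 z^{v_1}, …, t_m z^{v_m}). Then there exists a unique upper triangular m × m matrix Ĝ = (ĝ_{j,k}) of formal Laurent series, with every diagonal entry ĝ_{j,j} of order 0 and leading coefficient 1, such that (σ_q Ĝ) · D = C · Ĝ, where σ_q is applied entrywise. In particular Ĝ is invertible and C = (σ_q Ĝ) · D · Ĝ^{−1}. -/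
/-- The dilatation `σ_q` on formal Laurent series: `(σ_q G)_n = q^n G_n`,
i.e. `(σ_q G)(z) = G(qz)`. -/
noncomputable def sigmaQ (q : ℝ) (G : LaurentSeries ℂ) : LaurentSeries ℂ where
  coeff n := (q : ℂ) ^ n * G.coeff n
  isPWO_support' := G.isPWO_support'.mono (fun n hn => by
    simp only [Function.mem_support] at hn ⊢
    intro h
    exact hn (by rw [h, mul_zero]))

/-!
Column by column, `(σ_q Ĝ) · D = C · Ĝ` is a bidiagonal triangular system, solved by back
substitution from the diagonal upwards: the entry `x = ĝ_{j,k}` must satisfy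
`σ_q(x) · t_k z^{v_k} = g_j x + (q - 1) ĝ_{j+1,k}`. Dividing by `g_j` turns this into
`x = s · σ_q x + c` with `s = t_k z^{v_k} / g_j` of order `v_k - v_j ≥ 0`. If `τ` is the
constant coefficient of `s`, the coefficient of `z^n` reads
`(1 - τ q^n) x_n = ((s - τ) · σ_q x)_n + c_n`, whose right-hand side only involves
coefficients of `x` of index `< n`. For `j < k` non-resonance says `1 - τ q^n ≠ 0` for every
`n`, so `x` is the unique fixed point of an order-increasing map, obtained as a limit of
iterates. On the diagonal `τ = 1` and only `n = 0` is resonant; the normalisation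
`ĝ_{k,k}(0) = 1` fixes that coefficient.
-/

open HahnSeries

namespace LaurentSeries

variable {R : Type*} [Ring R]

def scaleCoeff (w : ℤ → R) : LaurentSeries R →+ LaurentSeries R where
  toFun x := ⟨fun n => w n * x.coeff n, x.isPWO_support.mono fun n hn h => hn (by simp [h])⟩
  map_zero' := by ext; simp
  map_add' x y := by ext; simp [mul_add]

@[simp]
theorem coeff_scaleCoeff (w : ℤ → R) (x : LaurentSeries R) (n : ℤ) :
    (scaleCoeff w x).coeff n = w n * x.coeff n :=
  rfl

theorem orderTop_le_orderTop_scaleCoeff (w : ℤ → R) (x : LaurentSeries R) :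
    x.orderTop ≤ (scaleCoeff w x).orderTop :=
  le_orderTop_iff_forall.2 fun n hn => by
    rw [coeff_scaleCoeff, coeff_eq_zero_of_lt_orderTop hn, mul_zero]

theorem eq_zero_of_forall_le_orderTop {x : LaurentSeries R} {n₀ : ℤ}
    (h : ∀ k : ℕ, ((n₀ + k : ℤ) : WithTop ℤ) ≤ x.orderTop) : x = 0 := by
  ext n
  refine le_orderTop_iff_forall.1 (h (n - n₀ + 1).toNat) n ?_
  exact_mod_cast (by omega : n < n₀ + (n - n₀ + 1).toNat)

theorem le_orderTop_sub_of_le {S : ℕ → LaurentSeries R} {n₀ : ℤ}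
    (hS : ∀ k : ℕ, ((n₀ + k : ℤ) : WithTop ℤ) ≤ (S (k + 1) - S k).orderTop) {k k' : ℕ}
    (hK : k ≤ k') : ((n₀ + k : ℤ) : WithTop ℤ) ≤ (S k' - S k).orderTop := by
  induction k', hK using Nat.le_induction with
  | base => simp
  | succ k' hK ih =>
    rw [← sub_add_sub_cancel]
    refine le_trans (le_min ((WithTop.coe_le_coe.2 ?_).trans (hS k')) ih)
      min_orderTop_le_orderTop_add
    omega

theorem exists_forall_le_orderTop_sub (S : ℕ → LaurentSeries R) (n₀ : ℤ)
    (hS : ∀ k : ℕ, ((n₀ + k : ℤ) : WithTop ℤ) ≤ (S (k + 1) - S k).orderTop) :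
    ∃ x : LaurentSeries R, ∀ k : ℕ,
      ((n₀ + k : ℤ) : WithTop ℤ) ≤ (x - S k).orderTop := by
  have hstable : ∀ {k k' : ℕ} {n : ℤ}, k ≤ k' → n < n₀ + k →
      (S k').coeff n = (S k).coeff n :=
    fun hK hn => sub_eq_zero.1 <| by
      rw [← coeff_sub]
      exact le_orderTop_iff_forall.1 (le_orderTop_sub_of_le hS hK) _ (by exact_mod_cast hn)
  set N : ℤ → ℕ := fun n => (n - n₀ + 1).toNat
  have hN : ∀ n, n < n₀ + N n := fun n => by simp only [N]; omega
  have hlimit : ∀ (k : ℕ) {n : ℤ}, n < n₀ + k → (S (N n)).coeff n = (S k).coeff n := by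
    intro k n hn
    rcases le_total k (N n) with h | h
    · exact hstable h hn
    · exact (hstable h (hN n)).symm
  have hsupp : Function.support (fun n => (S (N n)).coeff n) ⊆ (S 0).support ∪ Set.Ici n₀ :=
    fun n hn => or_iff_not_imp_right.2 fun hlt => by
      rw [Set.mem_Ici, not_le] at hlt
      rwa [HahnSeries.mem_support, ← hlimit 0 (by simpa using hlt)]
  refine ⟨⟨fun n => (S (N n)).coeff n,
    ((S 0).isPWO_support.union bddBelow_Ici.isWF.isPWO).mono hsupp⟩, fun k => ?_⟩
  refine le_orderTop_iff_forall.2 fun n hn => ?_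
  rw [coeff_sub, sub_eq_zero]
  exact hlimit k (by exact_mod_cast hn)

theorem orderTop_sub_C_coeff_zero_pos {s : LaurentSeries R}
    (hs : 0 ≤ s.orderTop) : 0 < (s - C (s.coeff 0)).orderTop := by
  refine (WithTop.coe_lt_coe.2 zero_lt_one).trans_le (le_orderTop_iff_forall.2 fun n hn => ?_)
  rw [coeff_sub, C_apply]
  rcases eq_or_ne n 0 with rfl | hn0
  · simp
  · have hneg : n < 0 := by
      have : n < 1 := by exact_mod_cast hn
      omega
    rw [coeff_single_of_ne hn0, sub_zero]
    exact coeff_eq_zero_of_lt_orderTop ((WithTop.coe_lt_coe.2 hneg).trans_le hs)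

section FixedPoint

variable (T : LaurentSeries R →+ LaurentSeries R)
  (hT : ∀ (x : LaurentSeries R) (n : ℤ),
    (n : WithTop ℤ) ≤ x.orderTop → ((n + 1 : ℤ) : WithTop ℤ) ≤ (T x).orderTop)
include hT

theorem orderTop_le_of_eq_add_apply {x c : LaurentSeries R} (hx : x = c + T x) :
    c.orderTop ≤ x.orderTop := by
  by_contra! hlt
  have hx0 : x ≠ 0 := by rintro rfl; simp at hlt
  have hord := order_eq_orderTop_of_ne_zero hx0
  have hcoeff : x.coeff x.order = c.coeff x.order + (T x).coeff x.order := by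
    rw [← coeff_add, ← hx]
  rw [coeff_eq_zero_of_lt_orderTop (hord.trans_lt hlt), coeff_eq_zero_of_lt_orderTop
    ((WithTop.coe_lt_coe.2 (lt_add_one _)).trans_le (hT x _ hord.le)), add_zero] at hcoeff
  exact coeff_order_eq_zero.not.2 hx0 hcoeff

theorem existsUnique_eq_add_apply (c : LaurentSeries R) : ∃! x, x = c + T x := by
  set S : ℕ → LaurentSeries R := fun k => (fun y => c + T y)^[k] 0
  have hS : ∀ k, S (k + 1) = c + T (S k) := fun k => Function.iterate_succ_apply' _ _ _
  have hc : (c.order : WithTop ℤ) ≤ c.orderTop := by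
    rcases eq_or_ne c 0 with rfl | hc
    · simp
    · exact (order_eq_orderTop_of_ne_zero hc).le
  have hdiff : ∀ k : ℕ, ((c.order + k : ℤ) : WithTop ℤ) ≤ (S (k + 1) - S k).orderTop := by
    intro k
    induction k with
    | zero => simpa [S] using hc
    | succ k ih =>
      have hstep : S (k + 1 + 1) - S (k + 1) = T (S (k + 1) - S k) := by
        rw [map_sub, hS (k + 1), hS k]; abel
      rw [hstep, Nat.cast_succ, ← add_assoc]
      exact hT _ _ ih
  obtain ⟨x, hx⟩ := exists_forall_le_orderTop_sub S _ hdiff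
  have hfix : x = c + T x := by
    refine (sub_eq_zero.1 (eq_zero_of_forall_le_orderTop (n₀ := c.order) fun k => ?_))
    have : x - (c + T x) = (x - S (k + 1)) - T (x - S k) := by
      rw [hS, map_sub]; abel
    rw [this]
    refine le_trans (le_min ((WithTop.coe_le_coe.2 ?_).trans (hx (k + 1)))
      ((WithTop.coe_le_coe.2 ?_).trans (hT _ _ (hx k)))) min_orderTop_le_orderTop_sub
    all_goals push_cast; omega
  refine ⟨x, hfix, fun y hy => ?_⟩
  have h : y - x = 0 + T (y - x) :=
    calc y - x = (c + T y) - (c + T x) := congrArg₂ _ hy hfix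
      _ = 0 + T (y - x) := by rw [map_sub]; abel
  simpa [sub_eq_zero] using orderTop_le_of_eq_add_apply T hT h

end FixedPoint

section Field

variable {K : Type*} [Field K]

theorem order_div {x a : LaurentSeries K} (hx : x ≠ 0) (ha : a ≠ 0) :
    (x / a).order = x.order - a.order := by
  have h := order_mul ha (div_ne_zero hx ha)
  rw [mul_div_cancel₀ x ha] at h
  omega

theorem leadingCoeff_div (x a : LaurentSeries K) :
    (x / a).leadingCoeff = x.leadingCoeff / a.leadingCoeff := by
  rcases eq_or_ne a 0 with rfl | ha
  · simp
  · rw [eq_div_iff (leadingCoeff_ne_zero.2 ha), ← leadingCoeff_mul, div_mul_cancel₀ x ha]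

theorem zero_le_orderTop_single_div {a : LaurentSeries K} (ha : a ≠ 0) {v : ℤ}
    (hv : a.order ≤ v) (t : K) : 0 ≤ (single v t / a).orderTop := by
  rcases eq_or_ne t 0 with rfl | ht
  · simp
  · rw [zero_le_orderTop_iff, order_div (single_ne_zero (a := v) ht) ha, order_single ht]
    omega

theorem coeff_zero_single_div {a : LaurentSeries K} (ha : a ≠ 0) {v : ℤ}
    (hv : a.order ≤ v) (t : K) :
    (single v t / a).coeff 0 = if v = a.order then t / a.leadingCoeff else 0 := by
  rcases eq_or_ne t 0 with rfl | ht
  · simp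
  have hord := order_div (single_ne_zero (a := v) ht) ha
  rw [order_single ht] at hord
  split_ifs with hva
  · have hlc : (single v t / a).leadingCoeff = t / a.leadingCoeff := by
      rw [leadingCoeff_div, leadingCoeff_of_single]
    rw [← hlc, leadingCoeff_eq, hord, hva, sub_self]
  · exact coeff_eq_zero_of_lt_order (by omega)

theorem orderTop_single_order_div_sub_one_pos {a : LaurentSeries K} (ha : a ≠ 0) :
    0 < (single a.order a.leadingCoeff / a - 1).orderTop := by
  have hlc := leadingCoeff_ne_zero.2 ha
  have hne : single a.order a.leadingCoeff / a ≠ 0 := div_ne_zero (single_ne_zero hlc) ha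
  rw [orderTop_self_sub_one_pos_iff, ← order_eq_orderTop_of_ne_zero hne,
    order_div (single_ne_zero (a := a.order) hlc) ha, order_single hlc, sub_self, leadingCoeff_div,
    leadingCoeff_of_single, div_self hlc]
  simp

end Field

end LaurentSeries

open LaurentSeries

theorem mul_eq_mul_add_iff_eq_div_mul_add {F : Type*} [Field F] {a : F} (ha : a ≠ 0)
    (x y d b : F) : y * d = a * x + b ↔ x = d / a * y + -b / a := by
  rw [div_mul_eq_mul_div, ← add_div, eq_div_iff ha]
  constructor <;> intro h <;> linear_combination -h

theorem sigmaQ_eq_scaleCoeff (q : ℝ) : sigmaQ q = scaleCoeff fun n : ℤ => (q : ℂ) ^ n :=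
  rfl

section Dilatation

variable (q : ℝ)

noncomputable def scaledMulSigmaQ (w : ℤ → ℂ) (h : LaurentSeries ℂ) :
    LaurentSeries ℂ →+ LaurentSeries ℂ :=
  (scaleCoeff w).comp ((AddMonoidHom.mulLeft h).comp (scaleCoeff fun n : ℤ => (q : ℂ) ^ n))

theorem scaledMulSigmaQ_apply (w : ℤ → ℂ) (h x : LaurentSeries ℂ) :
    scaledMulSigmaQ q w h x = scaleCoeff w (h * sigmaQ q x) :=
  rfl

theorem le_orderTop_mul_sigmaQ {h : LaurentSeries ℂ} (hh : 0 < h.orderTop)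
    {x : LaurentSeries ℂ} {n : ℤ} (hn : (n : WithTop ℤ) ≤ x.orderTop) :
    ((n + 1 : ℤ) : WithTop ℤ) ≤ (h * sigmaQ q x).orderTop := by
  have h1 : (1 : WithTop ℤ) ≤ h.orderTop := by
    revert hh
    induction h.orderTop with
    | top => exact fun _ => le_top
    | coe a => exact fun hh => mod_cast (show (0 : ℤ) < a by exact_mod_cast hh)
  calc ((n + 1 : ℤ) : WithTop ℤ) = 1 + n := by push_cast; rw [add_comm]
    _ ≤ h.orderTop + (sigmaQ q x).orderTop :=
      add_le_add h1 (hn.trans (orderTop_le_orderTop_scaleCoeff _ x))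
    _ ≤ (h * sigmaQ q x).orderTop := orderTop_add_le_mul

theorem le_orderTop_scaledMulSigmaQ (w : ℤ → ℂ) {h : LaurentSeries ℂ} (hh : 0 < h.orderTop)
    (x : LaurentSeries ℂ) (n : ℤ) (hn : (n : WithTop ℤ) ≤ x.orderTop) :
    ((n + 1 : ℤ) : WithTop ℤ) ≤ (scaledMulSigmaQ q w h x).orderTop :=
  (le_orderTop_mul_sigmaQ q hh hn).trans (orderTop_le_orderTop_scaleCoeff _ _)

theorem coeff_mul_sigmaQ (τ : ℂ) (s x : LaurentSeries ℂ) (n : ℤ) :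
    (s * sigmaQ q x).coeff n =
      τ * (q : ℂ) ^ n * x.coeff n + ((s - C τ) * sigmaQ q x).coeff n := by
  rw [sub_mul, coeff_sub, C_mul_eq_smul, coeff_smul, sigmaQ_eq_scaleCoeff, coeff_scaleCoeff,
    smul_eq_mul]
  ring

theorem eq_mul_sigmaQ_add_iff (τ : ℂ) {s c x : LaurentSeries ℂ} :
    x = s * sigmaQ q x + c ↔ ∀ n : ℤ,
      (1 - τ * (q : ℂ) ^ n) * x.coeff n = ((s - C τ) * sigmaQ q x).coeff n + c.coeff n := by
  rw [HahnSeries.ext_iff, funext_iff]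
  refine forall_congr' fun n => ?_
  rw [coeff_add, coeff_mul_sigmaQ q τ]
  constructor <;> intro H <;> linear_combination H

theorem existsUnique_eq_mul_sigmaQ_add {s : LaurentSeries ℂ} (hs : 0 ≤ s.orderTop)
    (hres : ∀ n : ℤ, s.coeff 0 * (q : ℂ) ^ n ≠ 1) (c : LaurentSeries ℂ) :
    ∃! x, x = s * sigmaQ q x + c := by
  set τ := s.coeff 0
  set w : ℤ → ℂ := fun n => (1 - τ * (q : ℂ) ^ n)⁻¹
  have hequiv : ∀ x, x = s * sigmaQ q x + c ↔
      x = scaleCoeff w c + scaledMulSigmaQ q w (s - C τ) x := by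
    intro x
    rw [eq_mul_sigmaQ_add_iff q τ, HahnSeries.ext_iff, funext_iff]
    refine forall_congr' fun n => ?_
    rw [coeff_add, scaledMulSigmaQ_apply, coeff_scaleCoeff, coeff_scaleCoeff, ← mul_add,
      eq_inv_mul_iff_mul_eq₀ (sub_ne_zero.2 (hres n).symm), add_comm]
  exact (existsUnique_congr hequiv).2 (existsUnique_eq_add_apply _
    (le_orderTop_scaledMulSigmaQ q w (orderTop_sub_C_coeff_zero_pos hs)) _)

theorem existsUnique_eq_mul_sigmaQ_of_coeff_zero_eq_one
    (hq : ∀ n : ℤ, n ≠ 0 → (q : ℂ) ^ n ≠ 1) {s : LaurentSeries ℂ}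
    (hs : 0 < (s - 1).orderTop) :
    ∃! x, x = s * sigmaQ q x ∧ x.order = 0 ∧ x.coeff 0 = 1 := by
  -- `w 0 = 0⁻¹ = 0` drops the resonant coefficient, which is pinned to `1` instead
  set w : ℤ → ℂ := fun n => (1 - (q : ℂ) ^ n)⁻¹
  set T := scaledMulSigmaQ q w (s - 1)
  have hT := le_orderTop_scaledMulSigmaQ q w hs
  have hcoeff : ∀ x, x = s * sigmaQ q x ↔
      ∀ n : ℤ, (1 - (q : ℂ) ^ n) * x.coeff n = ((s - 1) * sigmaQ q x).coeff n := fun x => by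
    simpa using eq_mul_sigmaQ_add_iff q 1 (s := s) (c := 0) (x := x)
  have hfix : ∀ x, x = 1 + T x ↔ ∀ n : ℤ,
      x.coeff n = (1 : LaurentSeries ℂ).coeff n + w n * ((s - 1) * sigmaQ q x).coeff n :=
    fun x => by simp only [HahnSeries.ext_iff, funext_iff, coeff_add, T, scaledMulSigmaQ_apply,
      coeff_scaleCoeff]
  refine (existsUnique_congr fun x => ?_).2 (existsUnique_eq_add_apply T hT 1)
  constructor
  · rintro ⟨hx, -, hx0⟩
    refine (hfix x).2 fun n => ?_
    rcases eq_or_ne n 0 with rfl | hn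
    · simp [w, hx0]
    · rw [coeff_one, if_neg hn, zero_add,
        eq_inv_mul_iff_mul_eq₀ (sub_ne_zero.2 (hq n hn).symm)]
      exact (hcoeff x).1 hx n
  intro hx
  have hpos : 0 ≤ x.orderTop := orderTop_one (R := ℂ) (Γ := ℤ) ▸
    orderTop_le_of_eq_add_apply T hT hx
  have htail : ((s - 1) * sigmaQ q x).coeff 0 = 0 :=
    coeff_eq_zero_of_lt_orderTop ((WithTop.coe_lt_coe.2 zero_lt_one).trans_le
      (le_orderTop_mul_sigmaQ q hs (n := 0) hpos))
  have hx0 : x.coeff 0 = 1 := by simpa [htail] using (hfix x).1 hx 0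
  refine ⟨(hcoeff x).2 fun n => ?_, le_antisymm (order_le_of_coeff_ne_zero (by simp [hx0]))
    (zero_le_orderTop_iff.1 hpos), hx0⟩
  rcases eq_or_ne n 0 with rfl | hn
  · simp [htail]
  · have H := (hfix x).1 hx n
    rwa [coeff_one, if_neg hn, zero_add,
      eq_inv_mul_iff_mul_eq₀ (sub_ne_zero.2 (hq n hn).symm)] at H

theorem existsUnique_sigmaQ_mul_single_eq_mul_add {a : LaurentSeries ℂ} (ha : a ≠ 0) {v : ℤ}
    (hv : a.order ≤ v) {t : ℂ}
    (hres : a.order = v → ∀ n : ℤ, a.leadingCoeff / t ≠ (q : ℂ) ^ n)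
    (b : LaurentSeries ℂ) : ∃! y, sigmaQ q y * single v t = a * y + b := by
  refine (existsUnique_congr fun y => mul_eq_mul_add_iff_eq_div_mul_add ha _ _ _ _).2
    (existsUnique_eq_mul_sigmaQ_add q (zero_le_orderTop_single_div ha hv t) (fun n => ?_) _)
  rw [coeff_zero_single_div ha hv]
  split_ifs with hva
  · intro h
    have ht : t ≠ 0 := by rintro rfl; simp at h
    have hlc := leadingCoeff_ne_zero.2 ha
    refine hres hva.symm n ?_
    field_simp at h
    rw [div_eq_iff ht]
    linear_combination -h
  · simp

theorem existsUnique_sigmaQ_mul_single_order_eq_mul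
    (hq : ∀ n : ℤ, n ≠ 0 → (q : ℂ) ^ n ≠ 1) {a : LaurentSeries ℂ} (ha : a ≠ 0) :
    ∃! y, sigmaQ q y * single a.order a.leadingCoeff = a * y ∧ y.order = 0 ∧ y.coeff 0 = 1 :=
  (existsUnique_congr fun y => and_congr_left fun _ => by
      simpa using mul_eq_mul_add_iff_eq_div_mul_add ha y (sigmaQ q y) _ 0).2
    (existsUnique_eq_mul_sigmaQ_of_coeff_zero_eq_one q hq
      (orderTop_single_order_div_sub_one_pos ha))

end Dilatation

section BackSubstitution

variable {α : Type*} {m : ℕ}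

def nextEntry [Zero α] (x : Fin m → α) (j : Fin m) : α :=
  if h : (j : ℕ) + 1 < m then x ⟨j + 1, h⟩ else 0

section Zero

variable [Zero α]

@[simp]
theorem nextEntry_castSucc {n : ℕ} (x : Fin (n + 1) → α) (i : Fin n) :
    nextEntry x i.castSucc = x i.succ := by
  simp [nextEntry, Fin.succ]

@[simp]
theorem nextEntry_last {n : ℕ} (x : Fin (n + 1) → α) : nextEntry x (Fin.last n) = 0 := by
  simp [nextEntry]

theorem nextEntry_eq_zero {x : Fin m → α} {k j : Fin m} (hx : ∀ i, k < i → x i = 0)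
    (hj : k ≤ j) : nextEntry x j = 0 := by
  unfold nextEntry
  split_ifs with h
  · exact hx _ (Fin.lt_def.2 (by simp only; omega))
  · rfl

theorem existsUnique_eq_apply_nextEntry (φ : Fin m → α → α) :
    ∃! x : Fin m → α, ∀ j, x j = φ j (nextEntry x j) := by
  cases m with
  | zero => exact ⟨finZeroElim, fun j => j.elim0, fun y _ => funext fun j => j.elim0⟩
  | succ n =>
    refine ⟨Fin.reverseInduction (φ (Fin.last n) 0) fun i a => φ i.castSucc a, fun j => ?_,
      fun y hy => funext fun j => ?_⟩
    · induction j using Fin.lastCases with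
      | last => simp [Fin.reverseInduction_last]
      | cast i => simp [Fin.reverseInduction_castSucc]
    · induction j using Fin.reverseInduction with
      | last => rw [hy, nextEntry_last, Fin.reverseInduction_last]
      | cast i ih => rw [hy, nextEntry_castSucc, ih, Fin.reverseInduction_castSucc]

theorem existsUnique_backSubstitution (R : Fin m → α → α → Prop) (N : α → Prop)
    (k : Fin m) (hzero : ∀ j, k < j → R j 0 0) (hdiag : ∃! y, R k y 0 ∧ N y)
    (hoff : ∀ j, j < k → ∀ b, ∃! y, R j y b) :
    ∃! x : Fin m → α,
      (∀ j, k < j → x j = 0) ∧ N (x k) ∧ ∀ j, R j (x j) (nextEntry x j) := by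
  classical
  obtain ⟨y₀, hy₀, hy₀u⟩ := hdiag
  choose F hF using fun j b =>
    if h : j < k then (hoff j h b).exists.imp fun _ hy (_ : j < k) => hy
    else ⟨0, fun h' => absurd h' h⟩
  set φ : Fin m → α → α := fun j b => if k < j then 0 else if j = k then y₀ else F j b
  refine (existsUnique_congr fun x => ?_).2 (existsUnique_eq_apply_nextEntry φ)
  constructor
  · rintro ⟨hx0, hxN, hxR⟩ j
    rcases lt_trichotomy k j with hkj | rfl | hjk
    · simp [φ, hkj, hx0 j hkj]
    · simp only [φ, lt_irrefl, if_false, if_true]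
      refine hy₀u _ ⟨?_, hxN⟩
      simpa [nextEntry_eq_zero hx0 le_rfl] using hxR k
    · simp only [φ, hjk.not_gt, hjk.ne, if_false]
      exact (hoff j hjk _).unique (hxR j) (hF j _ hjk)
  · intro hx
    have hx0 : ∀ j, k < j → x j = 0 := fun j h => by rw [hx j]; simp [φ, h]
    have hxk : x k = y₀ := by rw [hx k]; simp [φ]
    refine ⟨hx0, hxk ▸ hy₀.2, fun j => ?_⟩
    rcases lt_trichotomy k j with hkj | rfl | hjk
    · rw [hx0 j hkj, nextEntry_eq_zero hx0 hkj.le]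
      exact hzero j hkj
    · rw [hxk, nextEntry_eq_zero hx0 le_rfl]
      exact hy₀.1
    · rw [hx j]
      simp only [φ, hjk.not_gt, hjk.ne, if_false]
      exact hF j _ hjk

end Zero

variable [Semiring α]

theorem mul_apply_of_bidiagonal {C : Matrix (Fin m) (Fin m) α} {g : Fin m → α} {c : α}
    (hC : ∀ j k : Fin m,
      C j k = if j = k then g j else if (k : ℕ) = (j : ℕ) + 1 then c else 0)
    (G : Matrix (Fin m) (Fin m) α) (j k : Fin m) :
    (C * G) j k = g j * G j k + c * nextEntry (fun i => G i k) j := by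
  rw [Matrix.mul_apply, nextEntry]
  split_ifs with h
  · have hne : j ≠ ⟨j + 1, h⟩ := fun e => by simpa using congrArg Fin.val e
    rw [Fintype.sum_eq_add j ⟨j + 1, h⟩ hne fun l hl => by
        rw [hC, if_neg (Ne.symm hl.1), if_neg fun e => hl.2 (Fin.ext e), zero_mul],
      hC, hC, if_pos rfl, if_neg hne, if_pos rfl]
  · rw [mul_zero, add_zero, Fintype.sum_eq_single j fun l hl => by
        rw [hC, if_neg (Ne.symm hl), if_neg (by omega), zero_mul],
      hC, if_pos rfl]

theorem existsUnique_upperTriangular_map_mul_diagonal_eq (σ : α → α) (hσ : σ 0 = 0)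
    (d g : Fin m → α) (c : α) {C : Matrix (Fin m) (Fin m) α}
    (hC : ∀ j k : Fin m,
      C j k = if j = k then g j else if (k : ℕ) = (j : ℕ) + 1 then c else 0)
    (N : α → Prop) (hdiag : ∀ k, ∃! y, σ y * d k = g k * y ∧ N y)
    (hoff : ∀ j k, j < k → ∀ b, ∃! y, σ y * d k = g j * y + c * b) :
    ∃! G : Matrix (Fin m) (Fin m) α,
      (∀ j k, k < j → G j k = 0) ∧ (∀ j, N (G j j)) ∧
        G.map σ * Matrix.diagonal d = C * G := by
  set P : Fin m → (Fin m → α) → Prop := fun k x => (∀ j, k < j → x j = 0) ∧ N (x k) ∧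
    ∀ j, σ (x j) * d k = g j * x j + c * nextEntry x j
  have hcol : ∀ k, ∃! x, P k x := fun k =>
    existsUnique_backSubstitution (fun j y b => σ y * d k = g j * y + c * b) N k
      (fun j _ => by simp [hσ]) (by simpa using hdiag k) fun j hj => hoff j k hj
  have hiff : ∀ G : Matrix (Fin m) (Fin m) α,
      ((∀ j k, k < j → G j k = 0) ∧ (∀ j, N (G j j)) ∧
        G.map σ * Matrix.diagonal d = C * G) ↔ ∀ k, P k fun j => G j k := by
    intro G
    rw [← Matrix.ext_iff]
    simp only [P, Matrix.mul_diagonal, Matrix.map_apply, mul_apply_of_bidiagonal hC, forall_and]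
    exact and_congr forall_comm (and_congr Iff.rfl forall_comm)
  choose f hf hfu using hcol
  refine ⟨Matrix.of fun j k => f k j, (hiff _).2 hf, fun G hG => ?_⟩
  ext j k
  exact congrFun (hfu k _ ((hiff G).1 hG k)) j

end BackSubstitution

theorem exists_unique_formal_gauge_transformation_general
    (q : ℝ) (hq : 1 < q) (m : ℕ)
    (g : Fin m → LaurentSeries ℂ)
    (hg0 : ∀ j, g j ≠ 0)
    (hmono : ∀ j k : Fin m, j ≤ k → (g j).order ≤ (g k).order)
    (hres : ∀ j k : Fin m, j ≠ k → (g j).order = (g k).order →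
      ∀ n : ℤ, (g j).coeff (g j).order / (g k).coeff (g k).order ≠ (q : ℂ) ^ n)
    (C D : Matrix (Fin m) (Fin m) (LaurentSeries ℂ))
    (hC : ∀ j k : Fin m, C j k =
      if j = k then g j
      else if (k : ℕ) = (j : ℕ) + 1 then HahnSeries.C ((q : ℂ) - 1) else 0)
    (hD : D = Matrix.diagonal fun j =>
      HahnSeries.single ((g j).order) ((g j).coeff ((g j).order))) :
    (∃! G : Matrix (Fin m) (Fin m) (LaurentSeries ℂ),
      (∀ j k : Fin m, k < j → G j k = 0) ∧
      (∀ j : Fin m, (G j j).order = 0 ∧ (G j j).coeff 0 = 1) ∧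
      G.map (sigmaQ q) * D = C * G) ∧
    (∀ G : Matrix (Fin m) (Fin m) (LaurentSeries ℂ),
      ((∀ j k : Fin m, k < j → G j k = 0) ∧
       (∀ j : Fin m, (G j j).order = 0 ∧ (G j j).coeff 0 = 1) ∧
       G.map (sigmaQ q) * D = C * G) →
      IsUnit G ∧ C = G.map (sigmaQ q) * D * G⁻¹) := by
  simp only [← leadingCoeff_eq] at hres hD
  subst hD
  have hqn : ∀ n : ℤ, n ≠ 0 → (q : ℂ) ^ n ≠ 1 := fun n hn h =>
    hn <| (zpow_eq_one_iff_right₀ (by linarith) hq.ne').1 (by exact_mod_cast h)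
  refine ⟨existsUnique_upperTriangular_map_mul_diagonal_eq (sigmaQ q)
    (map_zero (scaleCoeff _)) (fun k => single (g k).order (g k).leadingCoeff) g _ hC _
    (fun k => existsUnique_sigmaQ_mul_single_order_eq_mul q hqn (hg0 k))
    (fun j k hjk _ => existsUnique_sigmaQ_mul_single_eq_mul_add q (hg0 j) (hmono j k hjk.le)
      (hres j k hjk.ne) _), fun G ⟨hlow, hnorm, heq⟩ => ?_⟩
  have hdet : IsUnit G.det := by
    rw [Matrix.det_of_isUpperTriangular hlow]
    exact isUnit_iff_ne_zero.2 <| Finset.prod_ne_zero_iff.2 fun j _ h => by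
      simpa [h] using (hnorm j).2
  refine ⟨(Matrix.isUnit_iff_isUnit_det G).2 hdet, ?_⟩
  rw [heq, Matrix.mul_nonsing_inv_cancel_right _ _ hdet]

/-- with `g_j = 1 + (q-1) f_j` nonzero, orders `v_j = v₀(g_j)` nondecreasing and
the non-resonance condition (`v_j = v_k`, `j ≠ k` ⟹ `t_j/t_k ∉ q^ℤ`), let `C` be the matrix
with diagonal `g_1, …, g_m`, superdiagonal entries `q-1` and zeros elsewhere, and let
`D = Diag(t_1 z^{v_1}, …, t_m z^{v_m})`.  Then there is a unique upper triangular matrix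
`Ĝ` of Laurent series, whose diagonal entries have order `0` and leading coefficient `1`,
with `(σ_q Ĝ) · D = C · Ĝ`; moreover any such `Ĝ` is invertible and
`C = (σ_q Ĝ) · D · Ĝ⁻¹`. -/
theorem exists_unique_formal_gauge_transformation
    (q : ℝ) (hq : 1 < q) (m : ℕ) (hm : 1 ≤ m)
    (f g : Fin m → LaurentSeries ℂ)
    (hgdef : ∀ j, g j = 1 + HahnSeries.C ((q : ℂ) - 1) * f j)
    (hg0 : ∀ j, g j ≠ 0)
    (hmono : ∀ j k : Fin m, j ≤ k → (g j).order ≤ (g k).order)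
    (hres : ∀ j k : Fin m, j ≠ k → (g j).order = (g k).order →
      ∀ n : ℤ, (g j).coeff (g j).order / (g k).coeff (g k).order ≠ (q : ℂ) ^ n)
    (C D : Matrix (Fin m) (Fin m) (LaurentSeries ℂ))
    (hC : ∀ j k : Fin m, C j k =
      if j = k then g j
      else if (k : ℕ) = (j : ℕ) + 1 then HahnSeries.C ((q : ℂ) - 1) else 0)
    (hD : D = Matrix.diagonal fun j =>
      HahnSeries.single ((g j).order) ((g j).coeff ((g j).order))) :
    (∃! G : Matrix (Fin m) (Fin m) (LaurentSeries ℂ),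
      (∀ j k : Fin m, k < j → G j k = 0) ∧
      (∀ j : Fin m, (G j j).order = 0 ∧ (G j j).coeff 0 = 1) ∧
      G.map (sigmaQ q) * D = C * G) ∧
    (∀ G : Matrix (Fin m) (Fin m) (LaurentSeries ℂ),
      ((∀ j k : Fin m, k < j → G j k = 0) ∧
       (∀ j : Fin m, (G j j).order = 0 ∧ (G j j).coeff 0 = 1) ∧
       G.map (sigmaQ q) * D = C * G) →
      IsUnit G ∧ C = G.map (sigmaQ q) * D * G⁻¹) :=
  exists_unique_formal_gauge_transformation_general q hq m g hg0 hmono hres C D hC hD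
end

section
/- Let q > 1 be real, b ∈ ℂ with b ≠ 0, and w ∈ ℤ. Let A be a nonzero formal Laurent series over ℂ with order v := v₀(A) and leading coefficient a := t₀(A), and let H be a formal Laurent series over ℂ. Assume v ≤ w, and, in case v = w, assume additionally that a/b ∉ {q^n : n ∈ ℤ}. Then there exists a unique formal Laurent series G over ℂ such that b · z^{w} · σ_q G = A · G + H; coefficientwise, this means: for every n ∈ ℤ, b · q^{n−w} · G_{n−w} = Σ_{i+j=n} A_i G_j + H_n. -/
/-!
Write `v` for the order of `A` and `a` for its leading coefficient. The operator
`L G = b z^w σ_q G - A G` sends `z^n` to `c n z^(n+v)` plus terms of higher order, where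
`c n = b q^n - a` if `v = w` and `c n = -a` if `v < w`; so `a ≠ 0` and the non-resonance
condition `a/b ∉ q^ℤ` keep every `c n` nonzero. An additive operator on Laurent series that is
lower triangular in this sense, with invertible diagonal, is bijective: a nonzero element of its
kernel has a nonzero image at the leading term, and `L G = H` can be solved one coefficient at a
time from the bottom up, the partial solutions agreeing coefficientwise from some stage on.
-/

open HahnSeries
open scoped LaurentSeries

namespace HahnSeries

theorem coeff_mul_add_of_forall_lt {Γ R : Type*} [AddCommMonoid Γ] [LinearOrder Γ]
    [IsOrderedCancelAddMonoid Γ] [NonUnitalNonAssocSemiring R] {x y : R⟦Γ⟧} {i j : Γ}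
    (hx : ∀ k < i, x.coeff k = 0) (hy : ∀ l < j, y.coeff l = 0) :
    (x * y).coeff (i + j) = x.coeff i * y.coeff j := by
  rw [coeff_mul, Finset.sum_eq_single (i, j)]
  · rintro ⟨k, l⟩ hkl hne
    rw [Finset.mem_antidiagonal, mem_support, mem_support] at hkl
    obtain ⟨hk, hl, hsum⟩ := hkl
    have hik : i ≤ k := not_lt.mp fun h => hk (hx k h)
    have hjl : j ≤ l := not_lt.mp fun h => hl (hy l h)
    obtain ⟨rfl, rfl⟩ := (add_eq_add_iff_eq_and_eq hik hjl).mp hsum.symm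
    exact (hne rfl).elim
  · intro h
    rw [Finset.mem_antidiagonal, mem_support, mem_support] at h
    by_cases hxi : x.coeff i = 0
    · simp [hxi]
    · have hyj : y.coeff j = 0 := by tauto
      simp [hyj]

end HahnSeries

namespace LaurentSeries

theorem exists_forall_lt_coeff_eq_of_coherent {R : Type*} [Zero R] (f : ℕ → R⸨X⸩) (N : ℤ)
    (hf : ∀ j k : ℕ, j ≤ k → ∀ m < N + j, (f k).coeff m = (f j).coeff m)
    (hf₀ : ∀ m < N, (f 0).coeff m = 0) :
    ∃ G : R⸨X⸩, ∀ k : ℕ, ∀ m < N + k, G.coeff m = (f k).coeff m := by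
  have hfN : ∀ k, ∀ m < N, (f k).coeff m = 0 := fun k m hm => by
    rw [hf 0 k k.zero_le m (by omega), hf₀ m hm]
  refine ⟨ofSuppBddBelow (fun m => (f ((m - N).toNat + 1)).coeff m) ⟨N, fun m hm => ?_⟩,
    fun k m hm => ?_⟩
  · exact not_lt.mp fun h => Function.mem_support.mp hm (hfN _ m h)
  · change (f _).coeff m = _
    rcases lt_or_ge m N with hmN | hmN
    · rw [hfN _ m hmN, hfN _ m hmN]
    · exact (hf _ k (by omega) m (by omega)).symm

variable {R : Type*} [Ring R]

/-- `L (single n r) = single (n + v) (c n * r) + (terms of order > n + v)`, uniformly in `n`. -/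
def IsLowerTriangular (L : R⸨X⸩ →+ R⸨X⸩) (v : ℤ) (c : ℤ → R) : Prop :=
  ∀ n (D : R⸨X⸩), (∀ m < n, D.coeff m = 0) → (L D).coeff (n + v) = c n * D.coeff n

noncomputable def approxSolution (L : R⸨X⸩ →+ R⸨X⸩) (v : ℤ) (c : ℤ → R) (H : R⸨X⸩) (N : ℤ) :
    ℕ → R⸨X⸩
  | 0 => 0
  | k + 1 =>
    let G := approxSolution L v c H N k
    G + single (N + k) (Ring.inverse (c (N + k)) * (H - L G).coeff (N + k + v))

namespace IsLowerTriangular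

variable {L : R⸨X⸩ →+ R⸨X⸩} {v : ℤ} {c : ℤ → R}

theorem injective (hL : IsLowerTriangular L v c) (hc : ∀ n, IsUnit (c n)) :
    Function.Injective L := by
  refine (injective_iff_map_eq_zero L).mpr fun D hD => ?_
  by_contra hne
  have hlead := hL D.order D fun m hm => coeff_eq_zero_of_lt_order hm
  rw [hD, coeff_zero, eq_comm, (hc _).mul_right_eq_zero] at hlead
  exact hne (coeff_order_eq_zero.mp hlead)

theorem coeff_approxSolution_of_le {H : R⸨X⸩} {N : ℤ} {j k : ℕ} (hjk : j ≤ k) :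
    ∀ m < N + j, (approxSolution L v c H N k).coeff m = (approxSolution L v c H N j).coeff m := by
  induction k, hjk using Nat.le_induction with
  | base => exact fun _ _ => rfl
  | succ k hjk ih =>
    intro m hm
    rw [approxSolution, coeff_add, coeff_single_of_ne (by omega), add_zero, ih m hm]

theorem coeff_sub_approxSolution (hL : IsLowerTriangular L v c) (hc : ∀ n, IsUnit (c n))
    {H : R⸨X⸩} {N : ℤ} (hH : ∀ m < N, H.coeff (m + v) = 0) (k : ℕ) :
    ∀ m < N + k, (H - L (approxSolution L v c H N k)).coeff (m + v) = 0 := by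
  induction k with
  | zero => simpa [approxSolution] using hH
  | succ k ih =>
    intro m hm
    set r := (H - L (approxSolution L v c H N k)).coeff (N + k + v)
    have hstep := hL m (single (N + k) (Ring.inverse (c (N + k)) * r)) fun m' hm' =>
      coeff_single_of_ne (by omega)
    rw [approxSolution, map_add, ← sub_sub, coeff_sub, hstep]
    rcases lt_or_eq_of_le (Int.lt_add_one_iff.mp (by omega : m < N + k + 1)) with hlt | rfl
    · rw [ih m hlt, coeff_single_of_ne (by omega), mul_zero, sub_zero]
    · rw [coeff_single_same, ← mul_assoc, Ring.mul_inverse_cancel _ (hc _), one_mul, sub_self]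

theorem surjective (hL : IsLowerTriangular L v c) (hc : ∀ n, IsUnit (c n)) :
    Function.Surjective L := by
  intro H
  set N := H.order - v
  have hH : ∀ m < N, H.coeff (m + v) = 0 := fun m hm => coeff_eq_zero_of_lt_order (by omega)
  obtain ⟨G, hG⟩ := exists_forall_lt_coeff_eq_of_coherent (approxSolution L v c H N) N
    (fun j k hjk => coeff_approxSolution_of_le hjk) (fun _ _ => rfl)
  refine ⟨G, ?_⟩
  ext n
  obtain ⟨m, rfl⟩ : ∃ m, n = m + v := ⟨n - v, by omega⟩
  set k := (m - N).toNat + 1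
  have hagree : ∀ m' < N + k, (G - approxSolution L v c H N k).coeff m' = 0 := fun m' hm' => by
    rw [coeff_sub, hG k m' hm', sub_self]
  have hlead := hL m _ fun m' hm' => hagree m' (by omega)
  rw [hagree m (by omega), mul_zero, map_sub, coeff_sub, sub_eq_zero] at hlead
  rw [hlead, eq_comm, ← sub_eq_zero, ← coeff_sub]
  exact coeff_sub_approxSolution hL hc hH k m (by omega)

theorem bijective (hL : IsLowerTriangular L v c) (hc : ∀ n, IsUnit (c n)) :
    Function.Bijective L :=
  ⟨hL.injective hc, hL.surjective hc⟩

end IsLowerTriangular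

end LaurentSeries

theorem coeff_sigmaQ (q : ℝ) (G : ℂ⸨X⸩) (n : ℤ) :
    (sigmaQ q G).coeff n = (q : ℂ) ^ n * G.coeff n :=
  rfl

noncomputable def sigmaQHom (q : ℝ) : ℂ⸨X⸩ →+ ℂ⸨X⸩ where
  toFun := sigmaQ q
  map_zero' := by ext n; simp [coeff_sigmaQ]
  map_add' G G' := by ext n; simp [coeff_sigmaQ, mul_add]

noncomputable def qDifferenceOp (q : ℝ) (b : ℂ) (w : ℤ) (A : ℂ⸨X⸩) : ℂ⸨X⸩ →+ ℂ⸨X⸩ :=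
  (AddMonoidHom.mulLeft (single w b)).comp (sigmaQHom q) - AddMonoidHom.mulLeft A

theorem qDifferenceOp_apply (q : ℝ) (b : ℂ) (w : ℤ) (A G : ℂ⸨X⸩) :
    qDifferenceOp q b w A G = single w b * sigmaQ q G - A * G :=
  rfl

theorem isLowerTriangular_qDifferenceOp (q : ℝ) (b : ℂ) {w : ℤ} {A : ℂ⸨X⸩} (hvw : A.order ≤ w) :
    LaurentSeries.IsLowerTriangular (qDifferenceOp q b w A) A.order
      fun n => (if A.order = w then b * (q : ℂ) ^ n else 0) - A.coeff A.order := by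
  intro n D hD
  have hshift : (single w b * sigmaQ q D).coeff (n + A.order) =
      if A.order = w then b * (q : ℂ) ^ n * D.coeff n else 0 := by
    rw [show n + A.order = n + A.order - w + w by ring, coeff_single_mul_add, coeff_sigmaQ]
    split_ifs with h
    · rw [h, add_sub_cancel_right, mul_assoc]
    · rw [hD _ (by omega), mul_zero, mul_zero]
  have hmul : (A * D).coeff (n + A.order) = A.coeff A.order * D.coeff n := by
    rw [add_comm, coeff_mul_add_of_forall_lt (fun k hk => coeff_eq_zero_of_lt_order hk) hD]
  rw [qDifferenceOp_apply, coeff_sub, hshift, hmul]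
  split_ifs <;> ring

theorem exists_unique_laurent_qdifference_solution_general
    (q : ℝ) (b : ℂ) (w : ℤ)
    (A H : LaurentSeries ℂ) (hA : A ≠ 0)
    (hvw : A.order ≤ w)
    (hres : A.order = w → ∀ n : ℤ, A.coeff A.order / b ≠ (q : ℂ) ^ n) :
    ∃! G : LaurentSeries ℂ, HahnSeries.single w b * sigmaQ q G = A * G + H := by
  have ha : A.coeff A.order ≠ 0 := fun h => hA (coeff_order_eq_zero.mp h)
  have hc (n : ℤ) : IsUnit ((if A.order = w then b * (q : ℂ) ^ n else 0) - A.coeff A.order) := by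
    refine isUnit_iff_ne_zero.mpr (sub_ne_zero.mpr ?_)
    split_ifs with hv
    · intro hbq
      have hb : b ≠ 0 := by rintro rfl; exact ha (by simpa using hbq.symm)
      exact hres hv n (by rw [← hbq, mul_div_cancel_left₀ _ hb])
    · exact fun h => ha h.symm
  simpa only [qDifferenceOp_apply, sub_eq_iff_eq_add'] using
    (Function.bijective_iff_existsUnique _).mp
      ((isLowerTriangular_qDifferenceOp q b hvw).bijective hc) H

/-- let `q > 1` be real, `b ∈ ℂ` nonzero, `w ∈ ℤ`, `A` a nonzero formal Laurent
series with order `v = v₀(A)` and leading coefficient `a = t₀(A)`, and `H` any Laurent series.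
If `v ≤ w` and, in case `v = w`, `a/b ∉ q^ℤ`, then there exists a unique Laurent series `G`
with `b · z^w · σ_q G = A · G + H`. -/
theorem exists_unique_laurent_qdifference_solution
    (q : ℝ) (hq : 1 < q) (b : ℂ) (hb : b ≠ 0) (w : ℤ)
    (A H : LaurentSeries ℂ) (hA : A ≠ 0)
    (hvw : A.order ≤ w)
    (hres : A.order = w → ∀ n : ℤ, A.coeff A.order / b ≠ (q : ℂ) ^ n) :
    ∃! G : LaurentSeries ℂ, HahnSeries.single w b * sigmaQ q G = A * G + H :=
  exists_unique_laurent_qdifference_solution_general q b w A H hA hvw hres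
end

section
/- Let d, a, ε, q₁ be as in the context and D := D_{d,a,ε}. For each q ∈ (1, q₁) let R(·,q) : D → ℂ be analytic. Assume: (i) there exist a″ ∈ (0, a) and q₀ ∈ (1, q₁] such that for all q ∈ (1, q₀) and all z ∈ D with qz ∈ D and |qz| < a″, one has |R(qz, q)| > |R(z, q)|; (ii) R(·,q) converges uniformly on compact subsets of D, as q → 1, to some function R̃ : D → ℂ. Then the family R(·,q) has the boundedness property 𝔹_{d,a,ε}: for every compact K ⊆ D there exist q₀′ ∈ (1, q₁], N₀ ∈ ℕ and M₀ > 0 such that |R(q^{−N} z, q)| < M₀ for all q ∈ (1, q₀′), all integers N > N₀ and all z ∈ K. -/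
open Filter Set

/-- The domain `D_{d,a,ε}` of nonzero complex numbers of modulus `< a` whose principal
argument lies in `(d-ε, d+ε)`. -/
def domainD (d a ε : ℝ) : Set ℂ :=
  {z : ℂ | z ≠ 0 ∧ ‖z‖ < a ∧ Complex.arg z ∈ Set.Ioo (d - ε) (d + ε)}

/-- The boundedness property `𝔹_{d,a,ε}` for a family `f(·,q)` indexed by `q ∈ (1,q₁)`. -/
def BddProp (d a ε q₁ : ℝ) (f : ℂ → ℝ → ℂ) : Prop :=
  ∀ K : Set ℂ, K ⊆ domainD d a ε → IsCompact K →
    ∃ q₀ ∈ Set.Ioc (1 : ℝ) q₁, ∃ N₀ : ℕ, ∃ M₀ : ℝ, 0 < M₀ ∧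
      ∀ q ∈ Set.Ioo (1 : ℝ) q₀, ∀ N : ℕ, N₀ < N → ∀ z ∈ K,
        ‖f (((q : ℂ) ^ N)⁻¹ * z) q‖ < M₀

/-- Uniform convergence of `f(·,q)` to `g` on compact subsets of `D_{d,a,ε}` as `q → 1⁺`. -/
def UnifConvQ1 (d a ε : ℝ) (f : ℂ → ℝ → ℂ) (g : ℂ → ℂ) : Prop :=
  ∀ K : Set ℂ, K ⊆ domainD d a ε → IsCompact K → ∀ δ : ℝ, 0 < δ →
    ∃ q₀ : ℝ, 1 < q₀ ∧ ∀ q ∈ Set.Ioo (1 : ℝ) q₀, ∀ z ∈ K, ‖f z q - g z‖ < δ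

/-!
Fix `c = a''/q₀`. The set `L = K ∪ {t z : t ∈ [0,1], z ∈ K, |t z| ≥ c}` is a compact subset of
`D`, so uniform convergence on `L`, together with the boundedness of the single continuous
function `R(·,q')`, bounds every `R(·,q)` on `L` by one constant `M`. Along the orbit `q^{-n} z` of
a point of `K`, a point of modulus `≥ c` lies in `L`; a point of modulus `< c` is mapped by `q` to
a point of modulus `< a''`, so by monotonicity `|R|` there is smaller than at the previous point.
Induction on `n` gives `|R(q^{-n} z, q)| < M` for all `n`.
-/

open Pointwise

theorem norm_lt_of_forall_norm_sub_lt {ι X E : Type*} [SeminormedAddCommGroup E]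
    {F : ι → X → E} {g : X → E} {s : Set ι} {L : Set X} {i₀ : ι} {C δ : ℝ} (hi₀ : i₀ ∈ s)
    (hC : ∀ x ∈ L, ‖F i₀ x‖ ≤ C) (hclose : ∀ i ∈ s, ∀ x ∈ L, ‖F i x - g x‖ < δ) :
    ∀ i ∈ s, ∀ x ∈ L, ‖F i x‖ < C + 2 * δ := by
  intro i hi x hx
  calc ‖F i x‖ ≤ ‖F i x - F i₀ x‖ + ‖F i₀ x‖ := norm_le_norm_sub_add _ _
    _ ≤ (‖F i x - g x‖ + ‖g x - F i₀ x‖) + ‖F i₀ x‖ := by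
        gcongr; exact norm_sub_le_norm_sub_add_norm_sub _ _ _
    _ < (δ + δ) + C := by
        rw [norm_sub_rev (g x)]
        linarith [hclose i hi x hx, hclose i₀ hi₀ x hx, hC x hx]
    _ = C + 2 * δ := by ring

theorem norm_apply_inv_pow_mul_lt {E : Type*} [Norm E] (f : ℂ → E) {q c M : ℝ} {z : ℂ}
    (h₀ : ‖f z‖ < M) (hfar : ∀ n : ℕ, c ≤ ‖((q : ℂ) ^ n)⁻¹ * z‖ → ‖f (((q : ℂ) ^ n)⁻¹ * z)‖ < M)
    (hnear : ∀ n : ℕ, ‖((q : ℂ) ^ (n + 1))⁻¹ * z‖ < c →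
      ‖f (((q : ℂ) ^ (n + 1))⁻¹ * z)‖ < ‖f (((q : ℂ) ^ n)⁻¹ * z)‖) (n : ℕ) :
    ‖f (((q : ℂ) ^ n)⁻¹ * z)‖ < M := by
  induction n with
  | zero => simpa using h₀
  | succ n ih =>
    rcases le_or_gt c ‖((q : ℂ) ^ (n + 1))⁻¹ * z‖ with hc | hc
    · exact hfar (n + 1) hc
    · exact (hnear n hc).trans ih

theorem ofReal_mul_mem_domainD {d a ε t : ℝ} {z : ℂ} (ht : t ∈ Ioc 0 1)
    (hz : z ∈ domainD d a ε) : (t : ℂ) * z ∈ domainD d a ε := by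
  obtain ⟨hz0, hza, hzarg⟩ := hz
  refine ⟨mul_ne_zero (Complex.ofReal_ne_zero.2 ht.1.ne') hz0, ?_, ?_⟩
  · rw [norm_mul, Complex.norm_real, Real.norm_of_nonneg ht.1.le]
    nlinarith [norm_nonneg z, ht.2]
  · rwa [Complex.arg_real_mul _ ht.1]

theorem inv_pow_mul_mem_domainD {d a ε q : ℝ} {z : ℂ} (hq : 1 ≤ q) (hz : z ∈ domainD d a ε)
    (n : ℕ) : ((q : ℂ) ^ n)⁻¹ * z ∈ domainD d a ε := by
  have hqn : (q ^ n)⁻¹ ∈ Ioc (0 : ℝ) 1 :=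
    ⟨by positivity, inv_le_one_of_one_le₀ (one_le_pow₀ hq)⟩
  simpa using ofReal_mul_mem_domainD hqn hz

def radialShell (K : Set ℂ) (c : ℝ) : Set ℂ :=
  (Icc (0 : ℝ) 1 • K) ∩ {w | c ≤ ‖w‖}

theorem isCompact_radialShell {K : Set ℂ} (hK : IsCompact K) (c : ℝ) :
    IsCompact (radialShell K c) :=
  (isCompact_Icc.smul_set hK).inter_right (isClosed_le continuous_const continuous_norm)

theorem radialShell_subset_domainD {d a ε c : ℝ} {K : Set ℂ} (hc : 0 < c)
    (hK : K ⊆ domainD d a ε) : radialShell K c ⊆ domainD d a ε := by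
  rintro _ ⟨⟨t, ht, z, hz, rfl⟩, hcw : c ≤ ‖t • z‖⟩
  have ht0 : t ≠ 0 := by
    rintro rfl
    rw [zero_smul, norm_zero] at hcw
    linarith
  change t • z ∈ _
  rw [Complex.real_smul]
  exact ofReal_mul_mem_domainD ⟨lt_of_le_of_ne ht.1 (Ne.symm ht0), ht.2⟩ (hK hz)

theorem inv_pow_mul_mem_radialShell {K : Set ℂ} {q c : ℝ} {z : ℂ} (hq : 1 ≤ q) (hz : z ∈ K)
    {n : ℕ} (hc : c ≤ ‖((q : ℂ) ^ n)⁻¹ * z‖) : ((q : ℂ) ^ n)⁻¹ * z ∈ radialShell K c := by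
  refine ⟨⟨(q ^ n)⁻¹, ⟨by positivity, inv_le_one_of_one_le₀ (one_le_pow₀ hq)⟩, z, hz, ?_⟩, hc⟩
  simp [Complex.real_smul]

theorem norm_apply_inv_pow_succ_mul_lt {E : Type*} [Norm E] {f : ℂ → E} {d a ε a'' q : ℝ}
    {z : ℂ} (hq : 1 ≤ q) (hz : z ∈ domainD d a ε)
    (hmon : ∀ w ∈ domainD d a ε, (q : ℂ) * w ∈ domainD d a ε → ‖(q : ℂ) * w‖ < a'' →
      ‖f w‖ < ‖f ((q : ℂ) * w)‖)
    {n : ℕ} (hn : q * ‖((q : ℂ) ^ (n + 1))⁻¹ * z‖ < a'') :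
    ‖f (((q : ℂ) ^ (n + 1))⁻¹ * z)‖ < ‖f (((q : ℂ) ^ n)⁻¹ * z)‖ := by
  have hstep : (q : ℂ) * (((q : ℂ) ^ (n + 1))⁻¹ * z) = ((q : ℂ) ^ n)⁻¹ * z := by
    have : (q : ℂ) ≠ 0 := Complex.ofReal_ne_zero.2 (by linarith)
    field_simp
    ring
  have hsmall : ‖(q : ℂ) * (((q : ℂ) ^ (n + 1))⁻¹ * z)‖ < a'' := by
    rwa [norm_mul, Complex.norm_real, Real.norm_of_nonneg (by linarith)]
  simpa only [hstep] using hmon _ (inv_pow_mul_mem_domainD hq hz _)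
    (hstep ▸ inv_pow_mul_mem_domainD hq hz n) hsmall

theorem bddProp_of_increasing_modulus_and_unif_conv_general
    (d a ε q₁ : ℝ)
    (R : ℂ → ℝ → ℂ) (Rt : ℂ → ℂ)
    (hRanal : ∀ q ∈ Set.Ioo (1 : ℝ) q₁, AnalyticOnNhd ℂ (fun z => R z q) (domainD d a ε))
    (hmono : ∃ a'' ∈ Set.Ioo (0 : ℝ) a, ∃ q₀ ∈ Set.Ioc (1 : ℝ) q₁,
      ∀ q ∈ Set.Ioo (1 : ℝ) q₀, ∀ z ∈ domainD d a ε,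
        (q : ℂ) * z ∈ domainD d a ε → ‖(q : ℂ) * z‖ < a'' →
        ‖R z q‖ < ‖R ((q : ℂ) * z) q‖)
    (hconv : UnifConvQ1 d a ε R Rt) :
    BddProp d a ε q₁ R := by
  intro K hKD hK
  obtain ⟨a'', ⟨ha''0, -⟩, q₀, ⟨hq₀1, hq₀q₁⟩, hmon⟩ := hmono
  set c := a'' / q₀
  have hc : 0 < c := by positivity
  set L := K ∪ radialShell K c
  have hLD : L ⊆ domainD d a ε := union_subset hKD (radialShell_subset_domainD hc hKD)
  have hLc : IsCompact L := hK.union (isCompact_radialShell hK c)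
  obtain ⟨q₂, hq₂1, hclose⟩ := hconv L hLD hLc 1 one_pos
  set q₃ := min q₀ q₂
  have hq₃ : q₃ ∈ Ioc 1 q₁ := ⟨lt_min hq₀1 hq₂1, (min_le_left _ _).trans hq₀q₁⟩
  have hq' : (1 + q₃) / 2 ∈ Ioo 1 q₃ := ⟨by linarith [hq₃.1], by linarith [hq₃.1]⟩
  obtain ⟨C, hC⟩ := hLc.exists_bound_of_continuousOn
    ((hRanal _ ⟨hq'.1, hq'.2.trans_le hq₃.2⟩).continuousOn.mono hLD)
  have hbound := norm_lt_of_forall_norm_sub_lt (F := fun q z => R z q) (g := Rt) (C := max C 0)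
    hq' (fun z hz => (hC z hz).trans (le_max_left _ _))
    (fun q hq z hz => hclose q ⟨hq.1, hq.2.trans_le (min_le_right _ _)⟩ z hz)
  refine ⟨q₃, hq₃, 0, max C 0 + 2 * 1, by positivity, fun q hq N _ z hz => ?_⟩
  refine norm_apply_inv_pow_mul_lt (R · q) (hbound q hq z (.inl hz))
    (fun n hn => hbound q hq _ (.inr (inv_pow_mul_mem_radialShell hq.1.le hz hn))) (fun n hn => ?_) N
  have hq₀ : q < q₀ := hq.2.trans_le (min_le_left _ _)
  refine norm_apply_inv_pow_succ_mul_lt hq.1.le (hKD hz) (hmon q ⟨hq.1, hq₀⟩) ?_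
  calc q * _ < q₀ * c := mul_lt_mul'' hq₀ hn (by linarith [hq.1]) (norm_nonneg _)
    _ = a'' := mul_div_cancel₀ _ (by linarith)

/-- if an analytic family `R(·,q)` satisfies `|R(qz,q)| > |R(z,q)|` near the
origin and converges uniformly on compacts to some `R̃` as `q → 1`, then the family has the
boundedness property `𝔹_{d,a,ε}`. -/
theorem bddProp_of_increasing_modulus_and_unif_conv
    (d a ε q₁ : ℝ) (ha : 0 < a) (hε : 0 < ε)
    (hd₁ : -Real.pi < d - ε) (hd₂ : d + ε < Real.pi) (hq₁ : 1 < q₁)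
    (R : ℂ → ℝ → ℂ) (Rt : ℂ → ℂ)
    (hRanal : ∀ q ∈ Set.Ioo (1 : ℝ) q₁, AnalyticOnNhd ℂ (fun z => R z q) (domainD d a ε))
    (hmono : ∃ a'' ∈ Set.Ioo (0 : ℝ) a, ∃ q₀ ∈ Set.Ioc (1 : ℝ) q₁,
      ∀ q ∈ Set.Ioo (1 : ℝ) q₀, ∀ z ∈ domainD d a ε,
        (q : ℂ) * z ∈ domainD d a ε → ‖(q : ℂ) * z‖ < a'' →
        ‖R z q‖ < ‖R ((q : ℂ) * z) q‖)
    (hconv : UnifConvQ1 d a ε R Rt) :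
    BddProp d a ε q₁ R :=
  bddProp_of_increasing_modulus_and_unif_conv_general d a ε q₁ R Rt hRanal hmono hconv
end

section
/- Let d, a, ε be as in the context and D := D_{d,a,ε}. Let b, c : D → ℂ be analytic with b nowhere zero on D. Assume: (i) for every η > 0 there exists ρ > 0 such that |c(w)/b(w)| ≤ η for all w ∈ D with |w| < ρ; (ii) for every z ∈ D the improper integral F(z) := lim_{δ→0⁺} ∫_{δ}^{1} c(sz)/(b(sz) · s) ds exists. Then the function u(z) := b(z) · F(z) is analytic on D and satisfies, for all z ∈ D, the linear differential relation z u′(z) = (z b′(z)/b(z)) · u(z) + c(z). -/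
open Filter Set intervalIntegral

/-!
In the logarithmic coordinate `ζ = log z` the sector `domainD d a ε` becomes the half-strip
`logDomainD d a ε`, on which `(c / b) ∘ exp` has a primitive `H`: wedge integrals from a base point,
made path-independent by Goursat's theorem for rectangles. Along the ray through `z`,
`∫_δ^1 c(sz) / (b(sz) s) ds = H (log z) - H (log z + log δ)`, so `H (log z + τ) → H (log z) - F z`
as `τ → -∞`. Since `c / b → 0` at the origin, `H` is Lipschitz with arbitrarily small constant far
to the left in the strip, so this limit is the same for all `z`. Hence `F = H ∘ log - const` is a
primitive of `c z / (b z * z)` on `domainD d a ε`, and the product rule gives the equation for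
`u = b * F`.
-/

open Complex Topology

namespace Complex

variable {E : Type*} [NormedAddCommGroup E] {s t : Set ℝ} {f : ℂ → E}

lemma _root_.Convex.reProdIm (hs : Convex ℝ s) (ht : Convex ℝ t) : Convex ℝ (s ×ℂ t) :=
  (hs.prod ht).linear_preimage equivRealProdLm.toLinearMap

lemma _root_.ContinuousOn.intervalIntegrable_comp_add_mul_I (hf : ContinuousOn f (s ×ℂ t))
    (hs : Convex ℝ s) {x₁ x₂ y : ℝ} (hx₁ : x₁ ∈ s) (hx₂ : x₂ ∈ s) (hy : y ∈ t) :
    IntervalIntegrable (fun x : ℝ ↦ f (x + y * I)) MeasureTheory.volume x₁ x₂ :=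
  (hf.comp (by fun_prop) fun x hx ↦ by
    simpa [mem_reProdIm, hy] using hs.ordConnected.uIcc_subset hx₁ hx₂ hx).intervalIntegrable

lemma _root_.ContinuousOn.intervalIntegrable_comp_const_add_mul_I (hf : ContinuousOn f (s ×ℂ t))
    (ht : Convex ℝ t) {x y₁ y₂ : ℝ} (hx : x ∈ s) (hy₁ : y₁ ∈ t) (hy₂ : y₂ ∈ t) :
    IntervalIntegrable (fun y : ℝ ↦ f (x + y * I)) MeasureTheory.volume y₁ y₂ :=
  (hf.comp (by fun_prop) fun y hy ↦ by
    simpa [mem_reProdIm, hx] using ht.ordConnected.uIcc_subset hy₁ hy₂ hy).intervalIntegrable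

variable [NormedSpace ℂ E]

lemma wedgeIntegral_add_wedgeIntegral_of_reProdIm [CompleteSpace E] (hs : Convex ℝ s)
    (ht : Convex ℝ t) (hf : DifferentiableOn ℂ f (s ×ℂ t)) {c z w : ℂ} (hc : c ∈ s ×ℂ t)
    (hz : z ∈ s ×ℂ t) (hw : w ∈ s ×ℂ t) :
    wedgeIntegral c z f + wedgeIntegral z w f = wedgeIntegral c w f := by
  rw [mem_reProdIm] at hc hz hw
  have hrect : Rectangle (z.re + c.im * I) (w.re + z.im * I) ⊆ s ×ℂ t :=
    (hs.reProdIm ht).rectangle_subset (by simp [mem_reProdIm, *]) (by simp [mem_reProdIm, *])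
      (by simp [mem_reProdIm, *]) (by simp [mem_reProdIm, *])
  have hboundary := integral_boundary_rect_eq_zero_of_differentiableOn f _ _ (hf.mono hrect)
  simp only [add_re, add_im, ofReal_re, ofReal_im, mul_re, mul_im, I_re, I_im, mul_zero,
    mul_one, sub_zero, add_zero, zero_add] at hboundary
  have hhoriz := integral_add_adjacent_intervals
    (hf.continuousOn.intervalIntegrable_comp_add_mul_I hs hc.1 hz.1 hc.2)
    (hf.continuousOn.intervalIntegrable_comp_add_mul_I hs hz.1 hw.1 hc.2)
  have hvert := integral_add_adjacent_intervals
    (hf.continuousOn.intervalIntegrable_comp_const_add_mul_I ht hw.1 hc.2 hz.2)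
    (hf.continuousOn.intervalIntegrable_comp_const_add_mul_I ht hw.1 hz.2 hw.2)
  simp only [wedgeIntegral, ← hhoriz, ← hvert, smul_add]
  linear_combination (norm := module) -hboundary

theorem _root_.DifferentiableOn.isExactOn_reProdIm [CompleteSpace E] (hs : IsOpen s)
    (ht : IsOpen t) (hs' : Convex ℝ s) (ht' : Convex ℝ t) (hf : DifferentiableOn ℂ f (s ×ℂ t)) :
    IsExactOn f (s ×ℂ t) := by
  rcases (s ×ℂ t).eq_empty_or_nonempty with hU | ⟨c, hc⟩
  · exact ⟨0, by simp [hU]⟩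
  refine ⟨fun w ↦ wedgeIntegral c w f, fun z hz ↦ ?_⟩
  obtain ⟨r, hr, hball⟩ := Metric.isOpen_iff.mp (hs.reProdIm ht) z hz
  have hlocal : HasDerivAt (fun w ↦ wedgeIntegral z w f) (f z) z :=
    (hf.mono hball).isConservativeOn.hasDerivAt_wedgeIntegral (hf.continuousOn.mono hball)
      (Metric.mem_ball_self hr)
  refine (hlocal.const_add (wedgeIntegral c z f)).congr_of_eventuallyEq ?_
  filter_upwards [Metric.ball_mem_nhds z hr] with w hw
  exact (wedgeIntegral_add_wedgeIntegral_of_reProdIm hs' ht' hf hc hz (hball hw)).symm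

end Complex

def logDomainD (d a ε : ℝ) : Set ℂ := Iio (Real.log a) ×ℂ Ioo (d - ε) (d + ε)

variable {d a ε : ℝ}

lemma log_mem_logDomainD {z : ℂ} (hz : z ∈ domainD d a ε) : log z ∈ logDomainD d a ε :=
  ⟨by simpa [log_re] using Real.log_lt_log (norm_pos_iff.mpr hz.1) hz.2.1,
    by simpa [log_im] using hz.2.2⟩

lemma exp_mem_domainD (ha : 0 < a) (hd₁ : -Real.pi < d - ε) (hd₂ : d + ε < Real.pi) {ζ : ℂ}
    (hζ : ζ ∈ logDomainD d a ε) : exp ζ ∈ domainD d a ε := by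
  obtain ⟨hre, him₁, him₂⟩ := hζ
  refine ⟨exp_ne_zero ζ, ?_, ?_⟩
  · simpa [norm_exp, Real.exp_log ha] using Real.exp_lt_exp.mpr hre
  · rw [← log_im, log_exp (by linarith) (by linarith)]
    exact ⟨him₁, him₂⟩

lemma domainD_eq_exp_image (ha : 0 < a) (hd₁ : -Real.pi < d - ε) (hd₂ : d + ε < Real.pi) :
    domainD d a ε = exp '' logDomainD d a ε :=
  Subset.antisymm (fun z hz ↦ ⟨log z, log_mem_logDomainD hz, exp_log hz.1⟩)
    (image_subset_iff.mpr fun _ ↦ exp_mem_domainD ha hd₁ hd₂)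

lemma isOpen_logDomainD : IsOpen (logDomainD d a ε) := isOpen_Iio.reProdIm isOpen_Ioo

lemma domainD_subset_slitPlane (hd₂ : d + ε < Real.pi) : domainD d a ε ⊆ slitPlane :=
  fun _ hz ↦ mem_slitPlane_iff_arg.mpr ⟨(hz.2.2.2.trans hd₂).ne, hz.1⟩

lemma isOpen_domainD (ha : 0 < a) (hd₁ : -Real.pi < d - ε) (hd₂ : d + ε < Real.pi) :
    IsOpen (domainD d a ε) := by
  rw [domainD_eq_exp_image ha hd₁ hd₂]
  exact isOpenMap_exp _ isOpen_logDomainD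

lemma add_ofReal_mem_logDomainD {ζ : ℂ} (hζ : ζ ∈ logDomainD d a ε) {τ : ℝ} (hτ : τ ≤ 0) :
    ζ + τ ∈ logDomainD d a ε :=
  ⟨by simpa using (add_le_of_nonpos_right hτ).trans_lt hζ.1, by simpa using hζ.2⟩

variable {q H : ℂ → ℂ}

lemma integral_div_eq_sub_of_hasDerivAt (ha : 0 < a) (hd₁ : -Real.pi < d - ε)
    (hd₂ : d + ε < Real.pi) (hq : ContinuousOn q (domainD d a ε))
    (hH : ∀ ζ ∈ logDomainD d a ε, HasDerivAt H (q (exp ζ)) ζ) {ζ : ℂ}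
    (hζ : ζ ∈ logDomainD d a ε) {δ : ℝ} (hδ₀ : 0 < δ) (hδ₁ : δ ≤ 1) :
    ∫ s in δ..1, q (s * exp ζ) / s = H ζ - H (ζ + Real.log δ) := by
  have hpos : ∀ s ∈ Icc δ 1, 0 < s := fun s hs ↦ hδ₀.trans_le hs.1
  have hmem : ∀ s ∈ Icc δ 1, ζ + Real.log s ∈ logDomainD d a ε := fun s hs ↦
    add_ofReal_mem_logDomainD hζ (Real.log_nonpos (hpos s hs).le hs.2)
  have hexp : ∀ s ∈ Icc δ 1, exp (ζ + Real.log s) = s * exp ζ := fun s hs ↦ by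
    rw [exp_add, ← ofReal_exp, Real.exp_log (hpos s hs), mul_comm]
  have hderiv : ∀ s ∈ Icc δ 1,
      HasDerivAt (fun s : ℝ ↦ H (ζ + Real.log s)) (q (s * exp ζ) / s) s := fun s hs ↦ by
    have hline := ((hH _ (hmem s hs)).comp _ ((hasDerivAt_id _).const_add ζ)).comp_ofReal
    simpa [hexp s hs, div_eq_inv_mul, Function.comp_def] using
      hline.scomp s (Real.hasDerivAt_log (hpos s hs).ne')
  have hcont : ContinuousOn (fun s : ℝ ↦ q (s * exp ζ) / s) (Icc δ 1) :=
    (hq.comp (by fun_prop) fun s hs ↦ hexp s hs ▸ exp_mem_domainD ha hd₁ hd₂ (hmem s hs)).div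
      (by fun_prop) fun s hs ↦ ofReal_ne_zero.mpr (hpos s hs).ne'
  have hftc := integral_eq_sub_of_hasDerivAt (uIcc_of_le hδ₁ ▸ hderiv)
    (hcont.intervalIntegrable_of_Icc hδ₁)
  rwa [Real.log_one, ofReal_zero, add_zero] at hftc

lemma tendsto_sub_comp_add_atBot (ha : 0 < a) (hd₁ : -Real.pi < d - ε)
    (hd₂ : d + ε < Real.pi) (hH : ∀ ζ ∈ logDomainD d a ε, HasDerivAt H (q (exp ζ)) ζ)
    (hsmall : ∀ η : ℝ, 0 < η → ∃ ρ : ℝ, 0 < ρ ∧ ∀ w ∈ domainD d a ε, ‖w‖ < ρ → ‖q w‖ ≤ η)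
    {ζ ζ' : ℂ} (hζ : ζ ∈ logDomainD d a ε) (hζ' : ζ' ∈ logDomainD d a ε) :
    Tendsto (fun τ : ℝ ↦ H (ζ + τ) - H (ζ' + τ)) atBot (𝓝 0) := by
  refine NormedAddGroup.tendsto_nhds_zero.mpr fun η hη ↦ ?_
  obtain ⟨ρ, hρ, hsmallρ⟩ := hsmall (η / (‖ζ - ζ'‖ + 1)) (by positivity)
  set V := logDomainD d a ε ∩ {ξ | ξ.re < Real.log ρ}
  have hconvex : Convex ℝ V :=
    ((convex_Iio (Real.log a)).reProdIm (convex_Ioo (d - ε) (d + ε))).inter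
      (convex_halfSpace_re_lt _)
  have hbound : ∀ ξ ∈ V, ‖q (exp ξ)‖ ≤ η / (‖ζ - ζ'‖ + 1) := fun ξ hξ ↦
    hsmallρ _ (exp_mem_domainD ha hd₁ hd₂ hξ.1) (by
      simpa [norm_exp, Real.exp_log hρ] using Real.exp_lt_exp.mpr hξ.2)
  filter_upwards [eventually_le_atBot 0,
    eventually_lt_atBot (Real.log ρ - max ζ.re ζ'.re)] with τ hτ₀ hτ
  have hV : ∀ ξ ∈ logDomainD d a ε, ξ.re ≤ max ζ.re ζ'.re → ξ + τ ∈ V := fun ξ hξ hre ↦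
    ⟨add_ofReal_mem_logDomainD hξ hτ₀,
      show (ξ + τ).re < _ by simp only [add_re, ofReal_re]; linarith⟩
  calc ‖H (ζ + τ) - H (ζ' + τ)‖
      ≤ η / (‖ζ - ζ'‖ + 1) * ‖(ζ + τ) - (ζ' + τ)‖ :=
        hconvex.norm_image_sub_le_of_norm_hasDerivWithin_le
          (fun ξ hξ ↦ (hH ξ hξ.1).hasDerivWithinAt) hbound
          (hV ζ' hζ' (le_max_right _ _)) (hV ζ hζ (le_max_left _ _))
    _ < η := by
        rw [add_sub_add_right_eq_sub, div_mul_eq_mul_div, div_lt_iff₀ (by positivity)]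
        nlinarith [norm_nonneg (ζ - ζ')]

lemma tendsto_comp_log_add_atBot (ha : 0 < a) (hd₁ : -Real.pi < d - ε)
    (hd₂ : d + ε < Real.pi) (hq : ContinuousOn q (domainD d a ε))
    (hH : ∀ ζ ∈ logDomainD d a ε, HasDerivAt H (q (exp ζ)) ζ) {z : ℂ} (hz : z ∈ domainD d a ε)
    {L : ℂ} (hL : Tendsto (fun δ : ℝ ↦ ∫ s in δ..1, q (s * z) / s) (𝓝[>] 0) (𝓝 L)) :
    Tendsto (fun τ : ℝ ↦ H (log z + τ)) atBot (𝓝 (H (log z) - L)) := by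
  refine (tendsto_const_nhds.sub (hL.comp Real.tendsto_exp_atBot_nhdsGT)).congr' ?_
  filter_upwards [eventually_le_atBot 0] with τ hτ
  have hray := integral_div_eq_sub_of_hasDerivAt ha hd₁ hd₂ hq hH (log_mem_logDomainD hz)
    (Real.exp_pos τ) (Real.exp_le_one_iff.mpr hτ)
  rw [exp_log hz.1, Real.log_exp] at hray
  simp [hray]

theorem variation_of_constants_analytic_solution_general
    (d a ε : ℝ) (ha : 0 < a)
    (hd₁ : -Real.pi < d - ε) (hd₂ : d + ε < Real.pi)
    (b c : ℂ → ℂ)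
    (hb : AnalyticOnNhd ℂ b (domainD d a ε))
    (hc : AnalyticOnNhd ℂ c (domainD d a ε))
    (hb0 : ∀ z ∈ domainD d a ε, b z ≠ 0)
    (hsmall : ∀ η : ℝ, 0 < η → ∃ ρ : ℝ, 0 < ρ ∧
      ∀ w ∈ domainD d a ε, ‖w‖ < ρ → ‖c w / b w‖ ≤ η)
    (F : ℂ → ℂ)
    (hF : ∀ z ∈ domainD d a ε,
      Tendsto (fun δ : ℝ => ∫ s in δ..1, c ((s : ℂ) * z) / (b ((s : ℂ) * z) * (s : ℂ)))
        (nhdsWithin 0 (Set.Ioi 0)) (nhds (F z))) :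
    AnalyticOnNhd ℂ (fun z => b z * F z) (domainD d a ε) ∧
    ∀ z ∈ domainD d a ε,
      z * deriv (fun w => b w * F w) z = (z * deriv b z / b z) * (b z * F z) + c z := by
  set D := domainD d a ε
  have hD : IsOpen D := isOpen_domainD ha hd₁ hd₂
  have hq : DifferentiableOn ℂ (fun w ↦ c w / b w) D := fun z hz ↦
    ((hc z hz).differentiableAt.div (hb z hz).differentiableAt (hb0 z hz)).differentiableWithinAt
  obtain ⟨H, hH⟩ : ∃ H : ℂ → ℂ, ∀ ζ ∈ logDomainD d a ε, HasDerivAt H (c (exp ζ) / b (exp ζ)) ζ :=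
    (hq.comp differentiable_exp.differentiableOn fun ζ ↦
      exp_mem_domainD ha hd₁ hd₂).isExactOn_reProdIm isOpen_Iio isOpen_Ioo (convex_Iio _)
        (convex_Ioo _ _)
  have hlim : ∀ z ∈ D, Tendsto (fun τ : ℝ ↦ H (log z + τ)) atBot (𝓝 (H (log z) - F z)) :=
    fun z hz ↦ tendsto_comp_log_add_atBot ha hd₁ hd₂ hq.continuousOn hH hz
      (by simpa only [div_div] using hF z hz)
  have hconst : ∀ z ∈ D, ∀ w ∈ D, H (log w) - F w = H (log z) - F z := fun z hz w hw ↦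
    sub_eq_zero.mp <| tendsto_nhds_unique ((hlim w hw).sub (hlim z hz)) <|
      tendsto_sub_comp_add_atBot ha hd₁ hd₂ hH hsmall (log_mem_logDomainD hw)
        (log_mem_logDomainD hz)
  have hF' : ∀ z ∈ D, HasDerivAt F (c z / b z * z⁻¹) z := fun z hz ↦ by
    have hlog := (hH _ (log_mem_logDomainD hz)).comp z
      (hasDerivAt_log (domainD_subset_slitPlane hd₂ hz))
    rw [exp_log hz.1] at hlog
    refine (hlog.sub_const (H (log z) - F z)).congr_of_eventuallyEq ?_
    filter_upwards [hD.mem_nhds hz] with w hw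
    simp [← hconst z hz w hw]
  have hFdiff : DifferentiableOn ℂ F D := fun z hz ↦
    (hF' z hz).differentiableAt.differentiableWithinAt
  refine ⟨fun z hz ↦ (hb z hz).mul (hFdiff.analyticAt (hD.mem_nhds hz)), fun z hz ↦ ?_⟩
  rw [((hb z hz).differentiableAt.hasDerivAt.fun_mul (hF' z hz)).deriv]
  field_simp [hb0 z hz, hz.1]

/-- variation of constants.  Let `b, c` be analytic on `D = D_{d,a,ε}` with
`b` nowhere vanishing; assume `c/b` tends to `0` at the origin and that for each `z ∈ D`
the improper integral `F(z) = lim_{δ→0⁺} ∫_δ^1 c(sz)/(b(sz) s) ds` exists.  Then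
`u(z) = b(z) F(z)` is analytic on `D` and satisfies
`z u'(z) = (z b'(z)/b(z)) u(z) + c(z)` on `D`. -/
theorem variation_of_constants_analytic_solution
    (d a ε : ℝ) (ha : 0 < a) (hε : 0 < ε)
    (hd₁ : -Real.pi < d - ε) (hd₂ : d + ε < Real.pi)
    (b c : ℂ → ℂ)
    (hb : AnalyticOnNhd ℂ b (domainD d a ε))
    (hc : AnalyticOnNhd ℂ c (domainD d a ε))
    (hb0 : ∀ z ∈ domainD d a ε, b z ≠ 0)
    (hsmall : ∀ η : ℝ, 0 < η → ∃ ρ : ℝ, 0 < ρ ∧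
      ∀ w ∈ domainD d a ε, ‖w‖ < ρ → ‖c w / b w‖ ≤ η)
    (F : ℂ → ℂ)
    (hF : ∀ z ∈ domainD d a ε,
      Tendsto (fun δ : ℝ => ∫ s in δ..1, c ((s : ℂ) * z) / (b ((s : ℂ) * z) * (s : ℂ)))
        (nhdsWithin 0 (Set.Ioi 0)) (nhds (F z))) :
    AnalyticOnNhd ℂ (fun z => b z * F z) (domainD d a ε) ∧
    ∀ z ∈ domainD d a ε,
      z * deriv (fun w => b w * F w) z = (z * deriv b z / b z) * (b z * F z) + c z :=
  variation_of_constants_analytic_solution_general d a ε ha hd₁ hd₂ b c hb hc hb0 hsmall F hF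
end
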